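/- Let k ≥ 1 and n = 2k+1, and consider the action of the dihedral group of order 2n on the vertex set of the middle-levels graph M_k in which the rotation generator acts by A ↦ A + 1 = { a + 1 mod n : a ∈ A } and a reflection generator acts by the complemented reversal ℵ. The number of orbits of this action on the vertices of M_k equals the k-th Catalan number C_k = (2k)!/(k!·(k+1)!). -/

import Mathlib

/-- Vertices of the middle-levels graph: the `k`- and `(k+1)`-element subsets of
`ZMod (2k+1)`. -/
abbrev Vert (k : ℕ) := {A : Finset (ZMod (2 * k + 1)) // A.card = k ∨ A.card = k + 1}

/-- The complemented reversal `ℵ(A) = { n−1−j : j ∈ Z_n \ A }` on subsets of `Z_n`. -/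
def aleph (n : ℕ) [NeZero n] (A : Finset (ZMod n)) : Finset (ZMod n) :=
  Aᶜ.image (fun j => (n : ZMod n) - 1 - j)

/-!
Burnside's lemma for the dihedral group of order `2n`, `n = 2k + 1`, acting on the
`C(2k+2, k+1)` vertices of `M_k`. Only the identity has fixed points: a rotation by `i` fixing
`A` gives `Σ A = Σ A + |A| i`, and `|A| ∈ {k, k+1}` is invertible mod `n`; a reflection maps
the `k`-th level to the `(k+1)`-th. Hence the number of orbits is
`C(2k+2, k+1) / (2(2k+1)) = C_k`.
-/

open MulAction

lemma Finset.mem_image_add_right {G : Type*} [AddGroup G] [DecidableEq G] {A : Finset G}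
    {i x : G} : x ∈ A.image (· + i) ↔ x - i ∈ A := by
  simp only [Finset.mem_image]
  exact ⟨by rintro ⟨a, ha, rfl⟩; simpa using ha, fun h => ⟨x - i, h, sub_add_cancel x i⟩⟩

section ComplementedReversal

variable {n : ℕ} [NeZero n]

lemma mem_aleph {A : Finset (ZMod n)} {x : ZMod n} : x ∈ aleph n A ↔ -1 - x ∉ A := by
  simp only [aleph, ZMod.natCast_self, zero_sub, Finset.mem_image, Finset.mem_compl]
  exact ⟨by rintro ⟨j, hj, rfl⟩; simpa using hj, fun h => ⟨-1 - x, h, by ring⟩⟩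

lemma card_aleph (A : Finset (ZMod n)) : (aleph n A).card = n - A.card := by
  rw [aleph, Finset.card_image_of_injective _ sub_right_injective, Finset.card_compl,
    ZMod.card]

end ComplementedReversal

namespace DihedralGroup

variable {n : ℕ} [NeZero n]

/-- `sr 0` acts by `ℵ`; the identity `ℵ (A + i) = ℵ A - i` is what makes this an action. -/
instance : MulAction (DihedralGroup n) (Finset (ZMod n)) where
  smul
    | r i, A => A.image (· + i)
    | sr i, A => aleph n (A.image (· + i))
  one_smul A := by
    change A.image (· + 0) = A
    simp
  mul_smul := by
    rintro (i | i) (j | j) A <;> ext x <;>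
      simp only [r_mul_r, r_mul_sr, sr_mul_r, sr_mul_sr, HSMul.hSMul, SMul.smul,
        Finset.mem_image_add_right, mem_aleph, not_not] <;> ring_nf

lemma r_smul_def (i : ZMod n) (A : Finset (ZMod n)) : r i • A = A.image (· + i) := rfl

lemma sr_smul_def (i : ZMod n) (A : Finset (ZMod n)) :
    sr i • A = aleph n (A.image (· + i)) := rfl

lemma card_r_smul (i : ZMod n) (A : Finset (ZMod n)) : (r i • A).card = A.card :=
  Finset.card_image_of_injective _ (add_left_injective i)

lemma card_sr_smul (i : ZMod n) (A : Finset (ZMod n)) : (sr i • A).card = n - A.card := by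
  rw [sr_smul_def, card_aleph, ← r_smul_def, card_r_smul]

lemma eq_zero_of_r_smul_eq_self {A : Finset (ZMod n)} (hA : A.card.Coprime n) {i : ZMod n}
    (h : r i • A = A) : i = 0 := by
  have hsum : ∑ x ∈ A, (x + i) = ∑ x ∈ A, x := calc
    _ = ∑ x ∈ r i • A, x := (Finset.sum_image fun _ _ _ _ => (add_left_injective i ·)).symm
    _ = ∑ x ∈ A, x := by rw [h]
  rw [Finset.sum_add_distrib, add_eq_left, Finset.sum_const, nsmul_eq_mul] at hsum
  exact ((ZMod.isUnit_iff_coprime _ _).mpr hA).mul_right_eq_zero.mp hsum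

lemma sr_smul_ne_self (hn : Odd n) (i : ZMod n) (A : Finset (ZMod n)) : sr i • A ≠ A := by
  intro h
  have hcard := congrArg Finset.card h
  rw [card_sr_smul] at hcard
  obtain ⟨m, rfl⟩ := hn
  omega

end DihedralGroup

lemma centralBinom_succ_eq_mul_catalan (n : ℕ) :
    (n + 1).centralBinom = 2 * (2 * n + 1) * catalan n :=
  Nat.eq_of_mul_eq_mul_left n.add_one_pos <| by
    rw [Nat.succ_mul_centralBinom_succ, ← succ_mul_catalan_eq_centralBinom]
    ring

lemma catalan_mul_factorial_mul_factorial (n : ℕ) :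
    catalan n * (n.factorial * (n + 1).factorial) = (2 * n).factorial := calc
  _ = (n + 1) * catalan n * n.factorial * n.factorial := by rw [Nat.factorial_succ]; ring
  _ = (2 * n).factorial := by
    rw [succ_mul_catalan_eq_centralBinom, Nat.centralBinom_eq_two_mul_choose, two_mul,
      Nat.add_choose_mul_factorial_mul_factorial]

namespace Vert

open DihedralGroup

variable {k : ℕ}

instance : MulAction (DihedralGroup (2 * k + 1)) (Vert k) where
  smul g v := ⟨g • v.1, by
    rcases g with i | i
    · rw [card_r_smul]; exact v.2
    · rw [card_sr_smul]; omega⟩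
  one_smul v := Subtype.ext (one_smul _ v.1)
  mul_smul g h v := Subtype.ext (mul_smul g h v.1)

lemma coe_smul (g : DihedralGroup (2 * k + 1)) (v : Vert k) : (g • v).1 = g • v.1 := rfl

lemma card_coprime (v : Vert k) : v.1.card.Coprime (2 * k + 1) := by
  rcases v.2 with h | h <;> rw [h]
  · rw [show 2 * k + 1 = k + (k + 1) by ring, Nat.coprime_self_add_right,
      Nat.coprime_self_add_right]
    exact Nat.coprime_one_right k
  · rw [show 2 * k + 1 = (k + 1) + k by ring, Nat.coprime_self_add_right,
      Nat.coprime_self_add_left]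
    exact Nat.coprime_one_left k

lemma fixedBy_eq_empty {g : DihedralGroup (2 * k + 1)} (hg : g ≠ 1) :
    fixedBy (Vert k) g = ∅ := by
  refine Set.eq_empty_of_forall_notMem fun v (hv : g • v = v) => ?_
  have hv := congrArg Subtype.val hv
  rw [coe_smul] at hv
  rcases g with i | i
  · exact hg (by rw [eq_zero_of_r_smul_eq_self (card_coprime v) hv, one_def])
  · exact sr_smul_ne_self (odd_two_mul_add_one k) i v.1 hv

lemma mem_orbit_iff {v w : Vert k} : w ∈ orbit (DihedralGroup (2 * k + 1)) v ↔
    ∃ i, w.1 = v.1.image (· + i) ∨ w.1 = aleph (2 * k + 1) (v.1.image (· + i)) := by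
  constructor
  · rintro ⟨i | i, rfl⟩
    · exact ⟨i, Or.inl rfl⟩
    · exact ⟨i, Or.inr rfl⟩
  · rintro ⟨i, h | h⟩
    · exact ⟨r i, Subtype.ext h.symm⟩
    · exact ⟨sr i, Subtype.ext h.symm⟩

lemma card_eq_centralBinom : Nat.card (Vert k) = (k + 1).centralBinom := by
  rw [Nat.card_eq_fintype_card, Fintype.card_subtype_or_disjoint, Fintype.card_finset_len,
    Fintype.card_finset_len, ZMod.card, Nat.centralBinom_eq_two_mul_choose, Nat.mul_succ,
    ← Nat.choose_succ_succ]
  simp only [Pi.disjoint_iff, Prop.disjoint_iff]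
  omega

theorem card_orbits_eq_catalan (k : ℕ) :
    Nat.card (orbitRel.Quotient (DihedralGroup (2 * k + 1)) (Vert k)) = catalan k := by
  classical
  have burnside :=
    sum_card_fixedBy_eq_card_orbits_mul_card_group (DihedralGroup (2 * k + 1)) (Vert k)
  rw [Finset.sum_eq_single 1 (fun g _ hg => by simp [fixedBy_eq_empty hg]) (by simp),
    DihedralGroup.card] at burnside
  simp only [← Nat.card_eq_fintype_card] at burnside
  rw [fixedBy_one_eq_univ, Nat.card_univ, card_eq_centralBinom,
    centralBinom_succ_eq_mul_catalan, mul_comm] at burnside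
  exact (Nat.eq_of_mul_eq_mul_right (by positivity : 0 < 2 * (2 * k + 1)) burnside).symm

end Vert

theorem stmt7_general (k : ℕ) :
    Nat.card {O : Set (Vert k) // ∃ v : Vert k,
      O = {w : Vert k | ∃ i : ZMod (2 * k + 1),
        w.1 = v.1.image (· + i) ∨ w.1 = aleph (2 * k + 1) (v.1.image (· + i))}} =
      (2 * k).factorial / (k.factorial * (k + 1).factorial) := by
  have orbit_eq (v : Vert k) : {w : Vert k | ∃ i : ZMod (2 * k + 1),
      w.1 = v.1.image (· + i) ∨ w.1 = aleph (2 * k + 1) (v.1.image (· + i))} =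
      {w | orbitRel (DihedralGroup (2 * k + 1)) (Vert k) w v} :=
    Set.ext fun _ => Vert.mem_orbit_iff.symm
  simp only [orbit_eq]
  rw [Nat.div_eq_of_eq_mul_left (by positivity) (catalan_mul_factorial_mul_factorial k).symm,
    ← Vert.card_orbits_eq_catalan]
  exact Nat.card_congr (Setoid.quotientEquivClasses _).symm

/-- The number of orbits on the vertices of `M_k` of the dihedral action generated by
translations `A ↦ A + i` and the complemented reversal `ℵ` equals the Catalan number
`(2k)!/(k!(k+1)!)`.  The orbit of `v` is `{w | ∃ i, w = v + i or w = ℵ(v + i)}`. -/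
theorem stmt7 (k : ℕ) (hk : 1 ≤ k) :
    Nat.card {O : Set (Vert k) // ∃ v : Vert k,
      O = {w : Vert k | ∃ i : ZMod (2 * k + 1),
        w.1 = v.1.image (· + i) ∨ w.1 = aleph (2 * k + 1) (v.1.image (· + i))}} =
      (2 * k).factorial / (k.factorial * (k + 1).factorial) :=
  stmt7_general k
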